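/- arXiv:1912.00054 — 2 statements merged into one kernel-verified Lean document; each statement's English description precedes it below -/
import Mathlib

section
/- For every bounded measurable function a : [0,T] → ℝ, all the integrals below converge and ∫_0^T ( ∫_t^T |a_r| |(∂K/∂t)(r,t)| dr )² dt = 2 ∫_0^T ∫_0^r φ̃(r,s) |a_r| |a_s| ds dr. -/
/-!
Let `g r t = |a r| |∂K/∂t (r,t)|` on the simplex `0 < t < r < T` and `g = 0` off it.
Expanding the square and applying Tonelli (in `ℝ≥0∞`),
`∫ (∫ g r t dr)² dt = ∫∫ Φ r s dr ds` with `Φ r s = ∫ g r t g s t dt = φ̃(r,s) |a r| |a s|`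
for `s < r`. Since `Φ` is symmetric and the diagonal is null, the double integral is twice its
part over `s < r`. Finiteness, needed to go back to real integrals, comes from the bound
`g r t ≤ D (r-t)^(α-1) t^(-β)` given by (H2) and from two Beta integrals:
`Φ r s ≲ (r-s)^(α-1) s^(α-2β)` and `∫₀ʳ Φ r s ds ≲ r^(2α-2β)`; all exponents stay above `-1`
because `β < 1/2`.
-/

open Real MeasureTheory intervalIntegral Set Function
open scoped ENNReal

section RpowIntegrals

variable {p q m : ℝ}

lemma intervalIntegrable_sub_rpow (hp : -1 < p) (t T : ℝ) :
    IntervalIntegrable (fun r : ℝ => (r - t) ^ p) volume t T := by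
  simpa using (intervalIntegrable_rpow' hp (a := 0) (b := T - t)).comp_sub_right t

lemma integral_sub_rpow (hp : -1 < p) (t T : ℝ) :
    ∫ r in t..T, (r - t) ^ p = (T - t) ^ (p + 1) / (p + 1) := by
  rw [intervalIntegral.integral_comp_sub_right (fun x => x ^ p), sub_self,
    integral_rpow (Or.inl hp), zero_rpow (by linarith), sub_zero]

lemma intervalIntegrable_rpow_mul_sub_rpow (hp : -1 < p) (hq : -1 < q) (hm : 0 < m) :
    IntervalIntegrable (fun u : ℝ => u ^ p * (m - u) ^ q) volume 0 m := by
  have hleft : IntervalIntegrable (fun u : ℝ => u ^ p * (m - u) ^ q) volume 0 (m / 2) := by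
    refine (intervalIntegrable_rpow' hp).mul_continuousOn
      ((continuousOn_const.sub continuousOn_id).rpow_const fun u hu => Or.inl ?_)
    rw [uIcc_of_le (by linarith)] at hu
    exact (sub_pos.2 (show u < m by linarith [hu.2])).ne'
  have hright : IntervalIntegrable (fun u : ℝ => u ^ p * (m - u) ^ q) volume (m / 2) m := by
    have h := ((intervalIntegrable_rpow' hq (a := 0) (b := m / 2)).comp_sub_left m).symm
    rw [sub_zero, show m - m / 2 = m / 2 by ring] at h
    refine h.continuousOn_mul (continuousOn_id.rpow_const fun u hu => Or.inl ?_)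
    rw [uIcc_of_le (by linarith)] at hu
    exact (by linarith [hu.1] : (0:ℝ) < u).ne'
  exact hleft.trans hright

/-- The Beta function `B(p + 1, q + 1)`. -/
noncomputable def rpowBetaIntegral (p q : ℝ) : ℝ := ∫ v in (0 : ℝ)..1, v ^ p * (1 - v) ^ q

lemma integral_rpow_mul_sub_rpow (hm : 0 < m) :
    ∫ u in (0 : ℝ)..m, u ^ p * (m - u) ^ q = rpowBetaIntegral p q * m ^ (p + q + 1) := by
  have hscale : EqOn (fun v : ℝ => (m * v) ^ p * (m - m * v) ^ q)
      (fun v => m ^ (p + q) * (v ^ p * (1 - v) ^ q)) (uIcc 0 1) := by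
    intro v hv
    rw [uIcc_of_le zero_le_one] at hv
    simp only
    rw [show m - m * v = m * (1 - v) by ring, mul_rpow hm.le hv.1,
      mul_rpow hm.le (by linarith [hv.2]), rpow_add hm]
    ring
  have h := integral_comp_mul_left (fun u : ℝ => u ^ p * (m - u) ^ q) (a := 0) (b := 1) hm.ne'
  rw [integral_congr hscale, intervalIntegral.integral_const_mul, mul_zero, mul_one] at h
  rw [smul_eq_mul, eq_inv_mul_iff_mul_eq₀ hm.ne'] at h
  rw [rpowBetaIntegral, rpow_add hm, rpow_one, ← h]
  ring

end RpowIntegrals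

section Domination

variable {f h : ℝ → ℝ} {a b : ℝ}

lemma integrableOn_Ioo_of_le (hf : AEStronglyMeasurable f volume) (hf0 : ∀ x, 0 ≤ f x)
    (hle : ∀ x ∈ Ioo a b, f x ≤ h x) (hh : IntervalIntegrable h volume a b) :
    IntegrableOn f (Ioo a b) := by
  refine (hh.def'.mono_set (Ioo_subset_Ioc_self.trans Ioc_subset_uIoc)).mono' hf.restrict ?_
  filter_upwards [ae_restrict_mem measurableSet_Ioo] with x hx
  rw [norm_of_nonneg (hf0 x)]
  exact hle x hx

lemma integrable_of_le_of_eq_zero_off_Ioo (hf : AEStronglyMeasurable f volume)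
    (hf0 : ∀ x, 0 ≤ f x) (hzero : ∀ x ∉ Ioo a b, f x = 0) (hle : ∀ x ∈ Ioo a b, f x ≤ h x)
    (hh : IntervalIntegrable h volume a b) : Integrable f := by
  have hsupp : (Ioo a b).indicator f = f :=
    indicator_eq_self.2 fun x hx => by_contra fun hx' => hx (hzero x hx')
  rw [← hsupp, integrable_indicator_iff measurableSet_Ioo]
  exact integrableOn_Ioo_of_le hf hf0 hle hh

lemma integral_le_of_le_of_eq_zero_off_Ioo (hab : a ≤ b) (hf : AEStronglyMeasurable f volume)
    (hf0 : ∀ x, 0 ≤ f x) (hzero : ∀ x ∉ Ioo a b, f x = 0) (hle : ∀ x ∈ Ioo a b, f x ≤ h x)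
    (hh : IntervalIntegrable h volume a b) : ∫ x, f x ≤ ∫ x in a..b, h x := by
  rw [← setIntegral_eq_integral_of_forall_compl_eq_zero hzero, integral_of_le hab,
    integral_Ioc_eq_integral_Ioo]
  exact setIntegral_mono_on (integrableOn_Ioo_of_le hf hf0 hle hh)
    ((intervalIntegrable_iff_integrableOn_Ioo_of_le hab).1 hh) measurableSet_Ioo hle

lemma intervalIntegrable_and_integral_eq_of_eqOn (hab : a ≤ b) (hh : Integrable h)
    (hzero : ∀ x ∉ Ioo a b, h x = 0) (heq : EqOn f h (Ioo a b)) :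
    IntervalIntegrable f volume a b ∧ ∫ x in a..b, f x = ∫ x, h x := by
  refine ⟨(intervalIntegrable_iff_integrableOn_Ioo_of_le hab).2
    (hh.integrableOn.congr_fun heq.symm measurableSet_Ioo), ?_⟩
  rw [integral_of_le hab, integral_Ioc_eq_integral_Ioo, setIntegral_congr_fun measurableSet_Ioo heq,
    setIntegral_eq_integral_of_forall_compl_eq_zero hzero]

end Domination

section SquareIdentity

variable {μ ν : Measure ℝ} [SFinite μ] [SFinite ν]

lemma lintegral_lintegral_eq_two_mul_of_symm [NullSingletonClass μ] {Φ : ℝ → ℝ → ℝ≥0∞}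
    (hΦ : Measurable (uncurry Φ)) (hsymm : ∀ r s, Φ r s = Φ s r) :
    ∫⁻ r, ∫⁻ s, Φ r s ∂μ ∂μ = 2 * ∫⁻ r, ∫⁻ s in Iio r, Φ r s ∂μ ∂μ := by
  set Ψ : ℝ → ℝ → ℝ≥0∞ := fun r s => {p : ℝ × ℝ | p.1 < p.2}.indicator (uncurry Φ) (r, s)
  have hΨ : Measurable (uncurry Ψ) :=
    hΦ.indicator (measurableSet_lt measurable_fst measurable_snd)
  have hIoi : ∀ r, ∫⁻ s in Ioi r, Φ r s ∂μ = ∫⁻ s, Ψ r s ∂μ := fun r => by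
    rw [← lintegral_indicator measurableSet_Ioi]
    simp [Ψ, indicator_apply]
  have hIio : ∀ s, ∫⁻ r in Iio s, Φ s r ∂μ = ∫⁻ r, Ψ r s ∂μ := fun s => by
    rw [← lintegral_indicator measurableSet_Iio]
    simp [Ψ, indicator_apply, hsymm s]
  have hsplit : ∀ r, ∫⁻ s, Φ r s ∂μ = ∫⁻ s in Iio r, Φ r s ∂μ + ∫⁻ s, Ψ r s ∂μ := fun r => by
    rw [← hIoi, ← lintegral_add_compl _ measurableSet_Iio, compl_Iio,
      setLIntegral_congr Ioi_ae_eq_Ici.symm]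
  simp_rw [hsplit]
  have hΨint : Measurable fun r => ∫⁻ s, Ψ r s ∂μ := hΨ.lintegral_prod_right'
  rw [lintegral_add_right _ hΨint,
    lintegral_lintegral_swap hΨ.aemeasurable]
  simp_rw [← hIio, two_mul]

lemma lintegral_sq_lintegral_eq_two_mul [NullSingletonClass μ] {f : ℝ → ℝ → ℝ≥0∞}
    (hf : Measurable (uncurry f)) :
    ∫⁻ t, (∫⁻ r, f r t ∂μ) ^ 2 ∂ν = 2 * ∫⁻ r, ∫⁻ s in Iio r, ∫⁻ t, f r t * f s t ∂ν ∂μ ∂μ := by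
  have hf' : ∀ {X : Type} [MeasurableSpace X] {u v : X → ℝ}, Measurable u → Measurable v →
      Measurable fun x => f (u x) (v x) := fun hu hv => hf.comp (hu.prodMk hv)
  have hsq : ∀ t, (∫⁻ r, f r t ∂μ) ^ 2 = ∫⁻ r, ∫⁻ s, f r t * f s t ∂μ ∂μ := fun t => by
    have hft : Measurable fun r => f r t := hf' measurable_id measurable_const
    rw [sq, lintegral_lintegral_mul hft.aemeasurable hft.aemeasurable]
  have hΦ : Measurable (uncurry fun r s => ∫⁻ t, f r t * f s t ∂ν) :=
    Measurable.lintegral_prod_right' (f := fun z : (ℝ × ℝ) × ℝ => f z.1.1 z.2 * f z.1.2 z.2)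
      ((hf' (by fun_prop) (by fun_prop)).mul (hf' (by fun_prop) (by fun_prop)))
  have hswap : Measurable (uncurry fun t r => ∫⁻ s, f r t * f s t ∂μ) :=
    Measurable.lintegral_prod_right' (f := fun z : (ℝ × ℝ) × ℝ => f z.1.2 z.1.1 * f z.2 z.1.1)
      ((hf' (by fun_prop) (by fun_prop)).mul (hf' (by fun_prop) (by fun_prop)))
  simp_rw [hsq]
  rw [lintegral_lintegral_swap hswap.aemeasurable]
  simp_rw [fun r => lintegral_lintegral_swap (μ := ν) (ν := μ)
    (f := fun t s => f r t * f s t) ((hf' (by fun_prop) (by fun_prop)).mul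
      (hf' (by fun_prop) (by fun_prop))).aemeasurable]
  exact lintegral_lintegral_eq_two_mul_of_symm hΦ fun r s => by simp_rw [mul_comm]

lemma integral_sq_integral_eq_two_mul [NullSingletonClass μ] {g : ℝ → ℝ → ℝ}
    (hg : Measurable (uncurry g)) (hg0 : ∀ r t, 0 ≤ g r t)
    (hint : ∀ t, Integrable (fun r => g r t) μ)
    (hsq : Integrable (fun t => (∫ r, g r t ∂μ) ^ 2) ν)
    (hprod : ∀ r s, s < r → Integrable (fun t => g r t * g s t) ν)
    (hinner : ∀ r, IntegrableOn (fun s => ∫ t, g r t * g s t ∂ν) (Iio r) μ)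
    (houter : Integrable (fun r => ∫ s in Iio r, ∫ t, g r t * g s t ∂ν ∂μ) μ) :
    ∫ t, (∫ r, g r t ∂μ) ^ 2 ∂ν = 2 * ∫ r, ∫ s in Iio r, ∫ t, g r t * g s t ∂ν ∂μ ∂μ := by
  have hΦ0 : ∀ r s, 0 ≤ ∫ t, g r t * g s t ∂ν := fun r s =>
    integral_nonneg fun t => mul_nonneg (hg0 r t) (hg0 s t)
  have hlhs : ENNReal.ofReal (∫ t, (∫ r, g r t ∂μ) ^ 2 ∂ν)
      = ∫⁻ t, (∫⁻ r, ENNReal.ofReal (g r t) ∂μ) ^ 2 ∂ν := by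
    rw [ofReal_integral_eq_lintegral_ofReal hsq (ae_of_all _ fun t => sq_nonneg _)]
    refine lintegral_congr fun t => ?_
    rw [ENNReal.ofReal_pow (integral_nonneg (hg0 · t)),
      ofReal_integral_eq_lintegral_ofReal (hint t) (ae_of_all _ (hg0 · t))]
  have hinner' : ∀ r, ENNReal.ofReal (∫ s in Iio r, ∫ t, g r t * g s t ∂ν ∂μ)
      = ∫⁻ s in Iio r, ∫⁻ t, ENNReal.ofReal (g r t) * ENNReal.ofReal (g s t) ∂ν ∂μ := by
    intro r
    rw [ofReal_integral_eq_lintegral_ofReal (hinner r) (ae_of_all _ (hΦ0 r))]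
    refine setLIntegral_congr_fun measurableSet_Iio fun s hs => ?_
    rw [ofReal_integral_eq_lintegral_ofReal (hprod r s hs)
      (ae_of_all _ fun t => mul_nonneg (hg0 r t) (hg0 s t))]
    simp_rw [ENNReal.ofReal_mul (hg0 r _)]
  have hrhs : ENNReal.ofReal (2 * ∫ r, ∫ s in Iio r, ∫ t, g r t * g s t ∂ν ∂μ ∂μ)
      = 2 * ∫⁻ r, ∫⁻ s in Iio r,
          ∫⁻ t, ENNReal.ofReal (g r t) * ENNReal.ofReal (g s t) ∂ν ∂μ ∂μ := by
    rw [ENNReal.ofReal_mul zero_le_two, ENNReal.ofReal_ofNat,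
      ofReal_integral_eq_lintegral_ofReal houter
        (ae_of_all _ fun r => setIntegral_nonneg measurableSet_Iio fun s _ => hΦ0 r s)]
    simp_rw [hinner']
  refine (ENNReal.ofReal_eq_ofReal_iff (integral_nonneg fun t => sq_nonneg _)
    (mul_nonneg zero_le_two (integral_nonneg fun r =>
      setIntegral_nonneg measurableSet_Iio fun s _ => hΦ0 r s))).1 ?_
  rw [hlhs, hrhs]
  exact lintegral_sq_lintegral_eq_two_mul (f := fun r t => ENNReal.ofReal (g r t)) hg.ennreal_ofReal

lemma stronglyMeasurable_integral_mul_slice {g : ℝ → ℝ → ℝ} (hg : Measurable (uncurry g)) :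
    StronglyMeasurable (uncurry fun r s => ∫ t, g r t * g s t ∂ν) :=
  StronglyMeasurable.integral_prod_right' (f := fun z : (ℝ × ℝ) × ℝ => g z.1.1 z.2 * g z.1.2 z.2)
    ((hg.comp ((measurable_fst.comp measurable_fst).prodMk measurable_snd)).mul
      (hg.comp ((measurable_snd.comp measurable_fst).prodMk measurable_snd))).stronglyMeasurable

lemma StronglyMeasurable.setIntegral_Iio {Φ : ℝ → ℝ → ℝ} (hΦ : StronglyMeasurable (uncurry Φ)) :
    StronglyMeasurable fun r => ∫ s in Iio r, Φ r s ∂μ := by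
  have h : ∀ r, ∫ s in Iio r, Φ r s ∂μ =
      ∫ s, {p : ℝ × ℝ | p.2 < p.1}.indicator (uncurry Φ) (r, s) ∂μ := fun r => by rw [← MeasureTheory.integral_indicator measurableSet_Iio]; simp [indicator_apply]
  simp_rw [h]
  exact (hΦ.indicator (measurableSet_lt measurable_snd measurable_fst)).integral_prod_right'

end SquareIdentity

structure SimplexKernelBound (g : ℝ → ℝ → ℝ) (T D α β : ℝ) : Prop where
  nonneg : ∀ r t, 0 ≤ g r t
  eq_zero : ∀ r t, ¬(0 < t ∧ t < r ∧ r < T) → g r t = 0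
  le : ∀ r t, 0 < t → t < r → g r t ≤ D * (r - t) ^ (α - 1) * t ^ (-β)

namespace SimplexKernelBound

variable {g : ℝ → ℝ → ℝ} {T D α β : ℝ}

lemma const_nonneg (hg : SimplexKernelBound g T D α β) : 0 ≤ D := by
  have h := (hg.nonneg 2 1).trans (hg.le 2 1 one_pos one_lt_two)
  norm_num at h
  exact h

lemma eq_zero_of_notMem_Ioo_fst (hg : SimplexKernelBound g T D α β) {r : ℝ} (hr : r ∉ Ioo 0 T)
    (t : ℝ) : g r t = 0 :=
  hg.eq_zero r t fun h => hr ⟨h.1.trans h.2.1, h.2.2⟩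

lemma eq_zero_of_notMem_Ioo_snd (hg : SimplexKernelBound g T D α β) (r : ℝ) {t : ℝ}
    (ht : t ∉ Ioo 0 T) : g r t = 0 :=
  hg.eq_zero r t fun h => ht ⟨h.1, h.2.1.trans h.2.2⟩

lemma mul_left (hg : SimplexKernelBound g T D α β) {w : ℝ → ℝ} {C : ℝ} (hw : ∀ r, 0 ≤ w r)
    (hwC : ∀ r ∈ Icc 0 T, w r ≤ C) (hC : 0 ≤ C) :
    SimplexKernelBound (fun r t => w r * g r t) T (C * D) α β where
  nonneg r t := mul_nonneg (hw r) (hg.nonneg r t)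
  eq_zero r t h := by simp only [hg.eq_zero r t h, mul_zero]
  le r t ht htr := by
    by_cases hr : r < T
    · rw [mul_assoc, mul_assoc, ← mul_assoc D]
      exact mul_le_mul (hwC r ⟨(ht.trans htr).le, hr.le⟩) (hg.le r t ht htr) (hg.nonneg r t) hC
    · rw [hg.eq_zero r t fun h => hr h.2.2, mul_zero]
      have := hg.const_nonneg
      positivity

lemma integrable_and_integral_slice_le (hg : SimplexKernelBound g T D α β)
    (hgm : Measurable (uncurry g)) (hα : 0 < α) {t : ℝ} (ht : t ∈ Ioo 0 T) :
    (Integrable fun r => g r t) ∧ ∫ r, g r t ≤ D * (T ^ α / α) * t ^ (-β) := by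
  have hm : AEStronglyMeasurable (fun r => g r t) volume :=
    (hgm.comp (measurable_id.prodMk measurable_const)).aestronglyMeasurable
  have hzero (r : ℝ) (hr : r ∉ Ioo t T) : g r t = 0 :=
    hg.eq_zero r t fun h => hr ⟨h.2.1, h.2.2⟩
  have hle (r : ℝ) (hr : r ∈ Ioo t T) := hg.le r t ht.1 hr.1
  have hint := ((intervalIntegrable_sub_rpow (p := α - 1) (by linarith) t T).const_mul D).mul_const
    (t ^ (-β))
  refine ⟨integrable_of_le_of_eq_zero_off_Ioo hm (hg.nonneg · t) hzero hle hint, ?_⟩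
  have hD := hg.const_nonneg
  calc ∫ r, g r t ≤ ∫ r in t..T, D * (r - t) ^ (α - 1) * t ^ (-β) :=
        integral_le_of_le_of_eq_zero_off_Ioo ht.2.le hm (hg.nonneg · t) hzero hle hint
    _ = D * ((T - t) ^ α / α) * t ^ (-β) := by
        rw [intervalIntegral.integral_mul_const, intervalIntegral.integral_const_mul,
          integral_sub_rpow (by linarith), sub_add_cancel]
    _ ≤ D * (T ^ α / α) * t ^ (-β) := by
        have := rpow_le_rpow (sub_pos.2 ht.2).le (sub_le_self T ht.1.le) hα.le
        have := rpow_nonneg ht.1.le (-β)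
        gcongr

lemma integrable_slice (hg : SimplexKernelBound g T D α β) (hgm : Measurable (uncurry g))
    (hα : 0 < α) (t : ℝ) : Integrable fun r => g r t := by
  by_cases ht : t ∈ Ioo 0 T
  · exact (hg.integrable_and_integral_slice_le hgm hα ht).1
  · simp_rw [hg.eq_zero_of_notMem_Ioo_snd _ ht]
    exact integrable_zero _ _ _

lemma integrable_sq_integral_slice (hg : SimplexKernelBound g T D α β)
    (hgm : Measurable (uncurry g)) (hα : 0 < α) (hβ : β < 1 / 2) :
    Integrable fun t => (∫ r, g r t) ^ 2 := by
  refine integrable_of_le_of_eq_zero_off_Ioo (a := 0) (b := T)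
    (hgm.stronglyMeasurable.integral_prod_left.aestronglyMeasurable.pow 2) (fun t => sq_nonneg _)
    (fun t ht => by simp [hg.eq_zero_of_notMem_Ioo_snd _ ht])
    (fun t ht => (pow_le_pow_left₀ (integral_nonneg (hg.nonneg · t))
      (hg.integrable_and_integral_slice_le hgm hα ht).2 2).trans_eq ?_)
    ((intervalIntegrable_rpow' (r := -(2 * β)) (by linarith)).const_mul ((D * (T ^ α / α)) ^ 2))
  rw [mul_pow, ← rpow_mul_natCast ht.1.le, Nat.cast_ofNat, neg_mul, mul_comm β]

lemma mul_le (hg : SimplexKernelBound g T D α β) (hα : α ≤ 1) {r s t : ℝ} (hsr : s < r)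
    (ht : t ∈ Ioo 0 s) :
    g r t * g s t ≤ D ^ 2 * (r - s) ^ (α - 1) * (t ^ (-(2 * β)) * (s - t) ^ (α - 1)) := by
  have hD := hg.const_nonneg
  have hrt : (r - t) ^ (α - 1) ≤ (r - s) ^ (α - 1) :=
    rpow_le_rpow_of_nonpos (sub_pos.2 hsr) (by linarith [ht.2]) (by linarith)
  have ht0 := rpow_nonneg ht.1.le (-β)
  have hst := rpow_nonneg (sub_pos.2 ht.2).le (α - 1)
  calc g r t * g s t
      ≤ (D * (r - t) ^ (α - 1) * t ^ (-β)) * (D * (s - t) ^ (α - 1) * t ^ (-β)) :=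
        mul_le_mul (hg.le r t ht.1 (ht.2.trans hsr)) (hg.le s t ht.1 ht.2) (hg.nonneg s t)
          ((hg.nonneg r t).trans (hg.le r t ht.1 (ht.2.trans hsr)))
    _ ≤ (D * (r - s) ^ (α - 1) * t ^ (-β)) * (D * (s - t) ^ (α - 1) * t ^ (-β)) := by gcongr
    _ = D ^ 2 * (r - s) ^ (α - 1) * (t ^ (-(2 * β)) * (s - t) ^ (α - 1)) := by
        rw [show -(2 * β) = -β + -β by ring, rpow_add ht.1]
        ring

lemma integrable_and_integral_mul_slice_le (hg : SimplexKernelBound g T D α β)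
    (hgm : Measurable (uncurry g)) (hα : 0 < α) (hα1 : α ≤ 1) (hβ : β < 1 / 2) {r s : ℝ}
    (hs : 0 < s) (hsr : s < r) :
    (Integrable fun t => g r t * g s t) ∧ ∫ t, g r t * g s t ≤
      D ^ 2 * rpowBetaIntegral (-(2 * β)) (α - 1) * (r - s) ^ (α - 1) * s ^ (α - 2 * β) := by
  have hm : AEStronglyMeasurable (fun t => g r t * g s t) volume :=
    ((hgm.comp (measurable_const.prodMk measurable_id)).mul
      (hgm.comp (measurable_const.prodMk measurable_id))).aestronglyMeasurable
  have h0 (t : ℝ) : 0 ≤ g r t * g s t := mul_nonneg (hg.nonneg r t) (hg.nonneg s t)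
  have hzero (t : ℝ) (ht : t ∉ Ioo 0 s) : g r t * g s t = 0 := by
    rw [hg.eq_zero s t fun h => ht ⟨h.1, h.2.1⟩, mul_zero]
  have hle (t : ℝ) (ht : t ∈ Ioo 0 s) := hg.mul_le hα1 hsr ht
  have hint := (intervalIntegrable_rpow_mul_sub_rpow (p := -(2 * β)) (q := α - 1) (by linarith)
    (by linarith) hs).const_mul (D ^ 2 * (r - s) ^ (α - 1))
  refine ⟨integrable_of_le_of_eq_zero_off_Ioo hm h0 hzero hle hint,
    (integral_le_of_le_of_eq_zero_off_Ioo hs.le hm h0 hzero hle hint).trans_eq ?_⟩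
  rw [intervalIntegral.integral_const_mul, integral_rpow_mul_sub_rpow hs,
    show -(2 * β) + (α - 1) + 1 = α - 2 * β by ring]
  ring

lemma integrable_mul_slice (hg : SimplexKernelBound g T D α β) (hgm : Measurable (uncurry g))
    (hα : 0 < α) (hα1 : α ≤ 1) (hβ : β < 1 / 2) {r s : ℝ} (hsr : s < r) :
    Integrable fun t => g r t * g s t := by
  by_cases hs : 0 < s
  · exact (hg.integrable_and_integral_mul_slice_le hgm hα hα1 hβ hs hsr).1
  · simp_rw [hg.eq_zero_of_notMem_Ioo_fst (r := s) fun h => hs h.1, mul_zero]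
    exact integrable_zero _ _ _

lemma integral_mul_slice_eq_zero_of_notMem_Ioo (hg : SimplexKernelBound g T D α β) {r : ℝ}
    (hr : r ∉ Ioo 0 T) (s : ℝ) : ∫ t, g r t * g s t = 0 := by
  simp [hg.eq_zero_of_notMem_Ioo_fst hr]

lemma indicator_Iio_integral_mul_slice_eq_zero (hg : SimplexKernelBound g T D α β) {r s : ℝ}
    (hs : s ∉ Ioo 0 r) : (Iio r).indicator (fun s => ∫ t, g r t * g s t) s = 0 := by
  by_cases hsr : s < r
  · rw [indicator_of_mem (mem_Iio.2 hsr)]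
    simp [hg.eq_zero_of_notMem_Ioo_fst (r := s) fun h => hs ⟨h.1, hsr⟩]
  · exact indicator_of_notMem (mt mem_Iio.1 hsr) _

lemma integrable_and_integral_indicator_Iio_le (hg : SimplexKernelBound g T D α β)
    (hgm : Measurable (uncurry g)) (hα : 0 < α) (hα1 : α ≤ 1) (hβ : β < 1 / 2) {r : ℝ}
    (hr : 0 < r) :
    Integrable ((Iio r).indicator fun s => ∫ t, g r t * g s t) ∧
      ∫ s, (Iio r).indicator (fun s => ∫ t, g r t * g s t) s ≤
        D ^ 2 * rpowBetaIntegral (-(2 * β)) (α - 1) * rpowBetaIntegral (α - 2 * β) (α - 1) *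
          r ^ (2 * α - 2 * β) := by
  have hm : AEStronglyMeasurable ((Iio r).indicator fun s => ∫ t, g r t * g s t) volume :=
    (((stronglyMeasurable_integral_mul_slice hgm).measurable.comp
      (measurable_const.prodMk measurable_id)).indicator measurableSet_Iio).aestronglyMeasurable
  have h0 : ∀ s, 0 ≤ (Iio r).indicator (fun s => ∫ t, g r t * g s t) s :=
    indicator_nonneg fun s _ => integral_nonneg fun t => mul_nonneg (hg.nonneg r t) (hg.nonneg s t)
  have hzero (s : ℝ) (hs : s ∉ Ioo 0 r) := hg.indicator_Iio_integral_mul_slice_eq_zero hs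
  have hle : ∀ s ∈ Ioo 0 r, (Iio r).indicator (fun s => ∫ t, g r t * g s t) s ≤
      D ^ 2 * rpowBetaIntegral (-(2 * β)) (α - 1) * (s ^ (α - 2 * β) * (r - s) ^ (α - 1)) := by
    intro s hs
    rw [indicator_of_mem (mem_Iio.2 hs.2)]
    exact (hg.integrable_and_integral_mul_slice_le hgm hα hα1 hβ hs.1 hs.2).2.trans_eq (by ring)
  have hint := (intervalIntegrable_rpow_mul_sub_rpow (p := α - 2 * β) (q := α - 1) (by linarith)
    (by linarith) hr).const_mul (D ^ 2 * rpowBetaIntegral (-(2 * β)) (α - 1))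
  refine ⟨integrable_of_le_of_eq_zero_off_Ioo hm h0 hzero hle hint,
    (integral_le_of_le_of_eq_zero_off_Ioo hr.le hm h0 hzero hle hint).trans_eq ?_⟩
  rw [intervalIntegral.integral_const_mul, integral_rpow_mul_sub_rpow hr,
    show α - 2 * β + (α - 1) + 1 = 2 * α - 2 * β by ring]
  ring

lemma integrableOn_Iio_integral_mul_slice (hg : SimplexKernelBound g T D α β)
    (hgm : Measurable (uncurry g)) (hα : 0 < α) (hα1 : α ≤ 1) (hβ : β < 1 / 2) (r : ℝ) :
    IntegrableOn (fun s => ∫ t, g r t * g s t) (Iio r) := by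
  rw [← integrable_indicator_iff measurableSet_Iio]
  by_cases hr : 0 < r
  · exact (hg.integrable_and_integral_indicator_Iio_le hgm hα hα1 hβ hr).1
  · simp_rw [hg.integral_mul_slice_eq_zero_of_notMem_Ioo fun h => hr h.1, indicator_zero]
    exact integrable_zero _ _ _

lemma integrable_setIntegral_Iio_integral_mul_slice (hg : SimplexKernelBound g T D α β)
    (hgm : Measurable (uncurry g)) (hα : 0 < α) (hα1 : α ≤ 1) (hβ : β < 1 / 2) :
    Integrable fun r => ∫ s in Iio r, ∫ t, g r t * g s t := by
  refine integrable_of_le_of_eq_zero_off_Ioo (a := 0) (b := T)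
    (StronglyMeasurable.setIntegral_Iio
      (stronglyMeasurable_integral_mul_slice hgm)).aestronglyMeasurable
    (fun r => setIntegral_nonneg measurableSet_Iio fun s _ =>
      integral_nonneg fun t => mul_nonneg (hg.nonneg r t) (hg.nonneg s t))
    (fun r hr => by simp [hg.integral_mul_slice_eq_zero_of_notMem_Ioo hr])
    (fun r hr => ?_)
    ((intervalIntegrable_rpow' (r := 2 * α - 2 * β) (by linarith)).const_mul
      (D ^ 2 * rpowBetaIntegral (-(2 * β)) (α - 1) * rpowBetaIntegral (α - 2 * β) (α - 1)))
  rw [← MeasureTheory.integral_indicator measurableSet_Iio]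
  exact (hg.integrable_and_integral_indicator_Iio_le hgm hα hα1 hβ hr.1).2

end SimplexKernelBound

noncomputable def kernelAbs (T : ℝ) (K' : ℝ → ℝ → ℝ) (r t : ℝ) : ℝ :=
  {p : ℝ × ℝ | 0 < p.2 ∧ p.2 < p.1 ∧ p.1 < T}.indicator (fun p => |K' p.1 p.2|) (r, t)

section kernelAbs

variable {T : ℝ} {K' : ℝ → ℝ → ℝ}

lemma kernelAbs_of_mem {r t : ℝ} (h : 0 < t ∧ t < r ∧ r < T) : kernelAbs T K' r t = |K' r t| :=
  indicator_of_mem (s := {p : ℝ × ℝ | 0 < p.2 ∧ p.2 < p.1 ∧ p.1 < T}) h _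

lemma kernelAbs_of_notMem {r t : ℝ} (h : ¬(0 < t ∧ t < r ∧ r < T)) : kernelAbs T K' r t = 0 :=
  indicator_of_notMem (s := {p : ℝ × ℝ | 0 < p.2 ∧ p.2 < p.1 ∧ p.1 < T}) h _

lemma measurable_kernelAbs
    (hK' : ContinuousOn (fun p : ℝ × ℝ => K' p.1 p.2) {p | 0 < p.2 ∧ p.2 < p.1 ∧ p.1 < T}) :
    Measurable (uncurry (kernelAbs T K')) := by
  have hU : IsOpen {p : ℝ × ℝ | 0 < p.2 ∧ p.2 < p.1 ∧ p.1 < T} :=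
    (isOpen_lt continuous_const continuous_snd).inter
      ((isOpen_lt continuous_snd continuous_fst).inter (isOpen_lt continuous_fst continuous_const))
  have h : uncurry (kernelAbs T K') = {p : ℝ × ℝ | 0 < p.2 ∧ p.2 < p.1 ∧ p.1 < T}.piecewise
      (fun p => |K' p.1 p.2|) (fun _ => 0) := piecewise_eq_indicator.symm
  rw [h]
  exact hK'.abs.measurable_piecewise continuousOn_const hU.measurableSet

lemma simplexKernelBound_kernelAbs {α β c : ℝ} (hT : 0 ≤ T) (hc : 0 ≤ c) (hβ : 0 ≤ β)
    (hH2 : ∀ s t : ℝ, 0 < s → s < t → t < T → |K' t s| ≤ c * (t - s) ^ (α - 1) * (t / s) ^ β) :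
    SimplexKernelBound (kernelAbs T K') T (c * T ^ β) α β where
  nonneg r t := indicator_nonneg (fun _ _ => abs_nonneg _) _
  eq_zero r t h := kernelAbs_of_notMem h
  le r t ht htr := by
    have hr := rpow_nonneg (sub_pos.2 htr).le (α - 1)
    by_cases hrT : r < T
    · rw [kernelAbs_of_mem ⟨ht, htr, hrT⟩]
      calc |K' r t| ≤ c * (r - t) ^ (α - 1) * (r / t) ^ β := hH2 t r ht htr hrT
        _ ≤ c * (r - t) ^ (α - 1) * (T / t) ^ β := by
            have := div_pos (ht.trans htr) ht
            gcongr
        _ = c * T ^ β * (r - t) ^ (α - 1) * t ^ (-β) := by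
            rw [div_rpow hT ht.le, rpow_neg ht.le]; ring
    · rw [kernelAbs_of_notMem fun h => hrT h.2.2]
      have := rpow_nonneg hT β
      have := rpow_nonneg ht.le (-β)
      positivity

variable {w : ℝ → ℝ} {D α β : ℝ}

lemma intervalIntegrable_and_integral_slice_eq {t : ℝ} (ht : t ∈ Ioo 0 T)
    (hint : Integrable fun r => w r * kernelAbs T K' r t) :
    IntervalIntegrable (fun r => w r * |K' r t|) volume t T ∧
      ∫ r in t..T, w r * |K' r t| = ∫ r, w r * kernelAbs T K' r t :=
  intervalIntegrable_and_integral_eq_of_eqOn ht.2.le hint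
    (fun r hr => by rw [kernelAbs_of_notMem fun h => hr ⟨h.2.1, h.2.2⟩, mul_zero])
    (fun r hr => by rw [kernelAbs_of_mem ⟨ht.1, hr.1, hr.2⟩])

lemma intervalIntegrable_and_integral_sq_slice_eq (hT : 0 ≤ T)
    (hg : SimplexKernelBound (fun r t => w r * kernelAbs T K' r t) T D α β)
    (hgm : Measurable (uncurry fun r t => w r * kernelAbs T K' r t)) (hα : 0 < α)
    (hβ : β < 1 / 2) :
    (∀ t ∈ Ioo 0 T, IntervalIntegrable (fun r => w r * |K' r t|) volume t T) ∧
      IntervalIntegrable (fun t => (∫ r in t..T, w r * |K' r t|) ^ 2) volume 0 T ∧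
      ∫ t in (0 : ℝ)..T, (∫ r in t..T, w r * |K' r t|) ^ 2 =
        ∫ t, (∫ r, w r * kernelAbs T K' r t) ^ 2 := by
  have hslice (t : ℝ) (ht : t ∈ Ioo 0 T) :=
    intervalIntegrable_and_integral_slice_eq ht (hg.integrable_slice hgm hα t)
  have hsq := intervalIntegrable_and_integral_eq_of_eqOn hT
    (hg.integrable_sq_integral_slice hgm hα hβ)
    (fun t ht => by
      simp [fun r => kernelAbs_of_notMem (K' := K') (r := r) fun h => ht ⟨h.1, h.2.1.trans h.2.2⟩])
    (fun t ht => congrArg (· ^ 2) (hslice t ht).2)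
  exact ⟨fun t ht => (hslice t ht).1, hsq⟩

lemma intervalIntegrable_and_integral_abs_mul_abs_eq {r s : ℝ} (hs : 0 < s) (hsr : s < r)
    (hrT : r < T) (hint : Integrable fun u => kernelAbs T K' r u * kernelAbs T K' s u) :
    IntervalIntegrable (fun u => |K' r u| * |K' s u|) volume 0 s ∧
      ∫ u in (0 : ℝ)..s, |K' r u| * |K' s u| = ∫ u, kernelAbs T K' r u * kernelAbs T K' s u :=
  intervalIntegrable_and_integral_eq_of_eqOn hs.le hint
    (fun u hu => by rw [kernelAbs_of_notMem fun h => hu ⟨h.1, h.2.1⟩, mul_zero])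
    (fun u hu => by
      rw [kernelAbs_of_mem ⟨hu.1, hu.2.trans hsr, hrT⟩,
        kernelAbs_of_mem ⟨hu.1, hu.2, hsr.trans hrT⟩])

lemma intervalIntegrable_abs_mul_abs_min (hk : SimplexKernelBound (kernelAbs T K') T D α β)
    (hkm : Measurable (uncurry (kernelAbs T K'))) (hα : 0 < α) (hα1 : α ≤ 1) (hβ : β < 1 / 2)
    {r s : ℝ} (hr : r ∈ Ioo 0 T) (hs : s ∈ Ioo 0 T) (hrs : r ≠ s) :
    IntervalIntegrable (fun u => |K' r u| * |K' s u|) volume 0 (min r s) := by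
  rcases hrs.lt_or_gt with hrs | hsr
  · rw [min_eq_left hrs.le]
    simpa only [mul_comm] using (intervalIntegrable_and_integral_abs_mul_abs_eq hr.1 hrs hs.2
      (hk.integrable_mul_slice hkm hα hα1 hβ hrs)).1
  · rw [min_eq_right hsr.le]
    exact (intervalIntegrable_and_integral_abs_mul_abs_eq hs.1 hsr hr.2
      (hk.integrable_mul_slice hkm hα hα1 hβ hsr)).1

lemma intervalIntegrable_and_integral_phi_eq {D' : ℝ}
    (hk : SimplexKernelBound (kernelAbs T K') T D α β) (hkm : Measurable (uncurry (kernelAbs T K')))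
    (hg : SimplexKernelBound (fun r t => w r * kernelAbs T K' r t) T D' α β)
    (hgm : Measurable (uncurry fun r t => w r * kernelAbs T K' r t)) (hα : 0 < α) (hα1 : α ≤ 1)
    (hβ : β < 1 / 2) {r : ℝ} (hr : r ∈ Ioo 0 T) :
    IntervalIntegrable
        (fun s => (∫ u in (0 : ℝ)..(min r s), |K' r u| * |K' s u|) * w r * w s) volume 0 r ∧
      ∫ s in (0 : ℝ)..r, (∫ u in (0 : ℝ)..(min r s), |K' r u| * |K' s u|) * w r * w s =
        ∫ s in Iio r, ∫ t, w r * kernelAbs T K' r t * (w s * kernelAbs T K' s t) := by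
  rw [← MeasureTheory.integral_indicator measurableSet_Iio]
  refine intervalIntegrable_and_integral_eq_of_eqOn hr.1.le
    ((integrable_indicator_iff measurableSet_Iio).2
      (hg.integrableOn_Iio_integral_mul_slice hgm hα hα1 hβ r))
    (fun s hs => hg.indicator_Iio_integral_mul_slice_eq_zero hs) (fun s hs => ?_)
  have hpair := intervalIntegrable_and_integral_abs_mul_abs_eq hs.1 hs.2 hr.2
    (hk.integrable_mul_slice hkm hα hα1 hβ hs.2)
  rw [indicator_of_mem (mem_Iio.2 hs.2), min_eq_right hs.2.le, hpair.2,
    ← MeasureTheory.integral_mul_const, ← MeasureTheory.integral_mul_const]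
  congr 1 with t
  ring

lemma intervalIntegrable_and_integral_integral_phi_eq {D' : ℝ} (hT : 0 ≤ T)
    (hk : SimplexKernelBound (kernelAbs T K') T D α β) (hkm : Measurable (uncurry (kernelAbs T K')))
    (hg : SimplexKernelBound (fun r t => w r * kernelAbs T K' r t) T D' α β)
    (hgm : Measurable (uncurry fun r t => w r * kernelAbs T K' r t)) (hα : 0 < α) (hα1 : α ≤ 1)
    (hβ : β < 1 / 2) :
    IntervalIntegrable (fun r => ∫ s in (0 : ℝ)..r,
        (∫ u in (0 : ℝ)..(min r s), |K' r u| * |K' s u|) * w r * w s) volume 0 T ∧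
      ∫ r in (0 : ℝ)..T, ∫ s in (0 : ℝ)..r,
          (∫ u in (0 : ℝ)..(min r s), |K' r u| * |K' s u|) * w r * w s =
        ∫ r, ∫ s in Iio r, ∫ t, w r * kernelAbs T K' r t * (w s * kernelAbs T K' s t) :=
  intervalIntegrable_and_integral_eq_of_eqOn hT
    (hg.integrable_setIntegral_Iio_integral_mul_slice hgm hα hα1 hβ)
    (fun r hr => by simp only [hg.integral_mul_slice_eq_zero_of_notMem_Ioo hr, integral_zero])
    (fun r hr => (intervalIntegrable_and_integral_phi_eq hk hkm hg hgm hα hα1 hβ hr).2)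

end kernelAbs

theorem volterra_abs_norm_identity_general
    (T : ℝ) (hT : 0 < T) (K' : ℝ → ℝ → ℝ)
    (hK'cont : ContinuousOn (fun p : ℝ × ℝ => K' p.1 p.2)
      {p : ℝ × ℝ | 0 < p.2 ∧ p.2 < p.1 ∧ p.1 < T})
    (α β c : ℝ) (hα : 0 < α) (hα' : α < 1 / 2) (hβ : 0 < β) (hβ' : β < 1 / 2)
    (hc : 0 < c)
    (hH2 : ∀ s t : ℝ, 0 < s → s < t → t < T →
      |K' t s| ≤ c * (t - s) ^ (α - 1) * (t / s) ^ β)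
    (a : ℝ → ℝ) (ha : Measurable a)
    (Ca : ℝ) (haB : ∀ t ∈ Set.Icc (0 : ℝ) T, |a t| ≤ Ca) :
    (∀ t ∈ Set.Ioo (0 : ℝ) T,
        IntervalIntegrable (fun r => |a r| * |K' r t|) MeasureTheory.volume t T) ∧
    IntervalIntegrable (fun t => (∫ r in t..T, |a r| * |K' r t|) ^ 2)
      MeasureTheory.volume 0 T ∧
    (∀ r ∈ Set.Ioo (0 : ℝ) T, ∀ s ∈ Set.Ioo (0 : ℝ) T, r ≠ s →
        IntervalIntegrable (fun u => |K' r u| * |K' s u|) MeasureTheory.volume 0 (min r s)) ∧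
    (∀ r ∈ Set.Ioo (0 : ℝ) T,
        IntervalIntegrable
          (fun s => (∫ u in (0 : ℝ)..(min r s), |K' r u| * |K' s u|) * |a r| * |a s|)
          MeasureTheory.volume 0 r) ∧
    IntervalIntegrable
      (fun r => ∫ s in (0 : ℝ)..r, (∫ u in (0 : ℝ)..(min r s), |K' r u| * |K' s u|) * |a r| * |a s|)
      MeasureTheory.volume 0 T ∧
    (∫ t in (0 : ℝ)..T, (∫ r in t..T, |a r| * |K' r t|) ^ 2)
      = 2 * ∫ r in (0 : ℝ)..T, ∫ s in (0 : ℝ)..r,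
          (∫ u in (0 : ℝ)..(min r s), |K' r u| * |K' s u|) * |a r| * |a s| := by
  have hα1 : α ≤ 1 := by linarith
  have hk := simplexKernelBound_kernelAbs hT.le hc.le hβ.le hH2
  have hkm := measurable_kernelAbs hK'cont
  have hg := hk.mul_left (fun r => abs_nonneg (a r)) haB
    ((abs_nonneg _).trans (haB 0 ⟨le_rfl, hT.le⟩))
  have hgm : Measurable (uncurry fun r t => |a r| * kernelAbs T K' r t) :=
    (ha.comp measurable_fst).abs.mul hkm
  obtain ⟨hslice, hsq, hlhs⟩ := intervalIntegrable_and_integral_sq_slice_eq hT.le hg hgm hα hβ'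
  obtain ⟨hphi, hrhs⟩ :=
    intervalIntegrable_and_integral_integral_phi_eq hT.le hk hkm hg hgm hα hα1 hβ'
  refine ⟨hslice, hsq,
    fun r hr s hs hrs => intervalIntegrable_abs_mul_abs_min hk hkm hα hα1 hβ' hr hs hrs,
    fun r hr => (intervalIntegrable_and_integral_phi_eq hk hkm hg hgm hα hα1 hβ' hr).1, hphi, ?_⟩
  rw [hlhs, hrhs]
  exact integral_sq_integral_eq_two_mul hgm hg.nonneg (hg.integrable_slice hgm hα)
    (hg.integrable_sq_integral_slice hgm hα hβ')
    (fun r s hsr => hg.integrable_mul_slice hgm hα hα1 hβ' hsr)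
    (hg.integrableOn_Iio_integral_mul_slice hgm hα hα1 hβ')
    (hg.integrable_setIntegral_Iio_integral_mul_slice hgm hα hα1 hβ')

/-- For a Volterra kernel `K` satisfying (H1)-(H2) with derivative
`K' = ∂K/∂t`, and bounded measurable `a : [0,T] → ℝ`, all the integrals converge and
`∫_0^T (∫_t^T |a_r| |K'(r,t)| dr)² dt = 2 ∫_0^T ∫_0^r φ̃(r,s) |a_r| |a_s| ds dr`,
where `φ̃(r,s) = ∫_0^{min(r,s)} |K'(r,u)| |K'(s,u)| du`. -/
theorem volterra_abs_norm_identity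
    (T : ℝ) (hT : 0 < T) (K K' : ℝ → ℝ → ℝ)
    (hVol : ∀ t s : ℝ, t < s → K t s = 0)
    (hKcont : ContinuousOn (fun p : ℝ × ℝ => K p.1 p.2)
      {p : ℝ × ℝ | 0 < p.2 ∧ p.2 ≤ p.1 ∧ p.1 < T})
    (hK' : ∀ s t : ℝ, 0 < s → s < t → t < T → HasDerivAt (fun τ => K τ s) (K' t s) t)
    (hK'cont : ContinuousOn (fun p : ℝ × ℝ => K' p.1 p.2)
      {p : ℝ × ℝ | 0 < p.2 ∧ p.2 < p.1 ∧ p.1 < T})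
    (α β c : ℝ) (hα : 0 < α) (hα' : α < 1 / 2) (hβ : 0 < β) (hβ' : β < 1 / 2)
    (hc : 0 < c)
    (hH2 : ∀ s t : ℝ, 0 < s → s < t → t < T →
      |K' t s| ≤ c * (t - s) ^ (α - 1) * (t / s) ^ β)
    (a : ℝ → ℝ) (ha : Measurable a)
    (Ca : ℝ) (haB : ∀ t ∈ Set.Icc (0 : ℝ) T, |a t| ≤ Ca) :
    (∀ t ∈ Set.Ioo (0 : ℝ) T,
        IntervalIntegrable (fun r => |a r| * |K' r t|) MeasureTheory.volume t T) ∧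
    IntervalIntegrable (fun t => (∫ r in t..T, |a r| * |K' r t|) ^ 2)
      MeasureTheory.volume 0 T ∧
    (∀ r ∈ Set.Ioo (0 : ℝ) T, ∀ s ∈ Set.Ioo (0 : ℝ) T, r ≠ s →
        IntervalIntegrable (fun u => |K' r u| * |K' s u|) MeasureTheory.volume 0 (min r s)) ∧
    (∀ r ∈ Set.Ioo (0 : ℝ) T,
        IntervalIntegrable
          (fun s => (∫ u in (0 : ℝ)..(min r s), |K' r u| * |K' s u|) * |a r| * |a s|)
          MeasureTheory.volume 0 r) ∧
    IntervalIntegrable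
      (fun r => ∫ s in (0 : ℝ)..r, (∫ u in (0 : ℝ)..(min r s), |K' r u| * |K' s u|) * |a r| * |a s|)
      MeasureTheory.volume 0 T ∧
    (∫ t in (0 : ℝ)..T, (∫ r in t..T, |a r| * |K' r t|) ^ 2)
      = 2 * ∫ r in (0 : ℝ)..T, ∫ s in (0 : ℝ)..r,
          (∫ u in (0 : ℝ)..(min r s), |K' r u| * |K' s u|) * |a r| * |a s| :=
  volterra_abs_norm_identity_general T hT K' hK'cont α β c hα hα' hβ hβ' hc hH2 a ha Ca haB
end

section
/- There exist constants M > 0 and 0 < λ < min_{1≤j≤n} (4 R_j(T))^{−1} such that |u(t,x)| ≤ M exp(λ|x|²) for all (t,x) ∈ [t₀,T) × ℝⁿ. -/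
/-!
Both terms of `u` are estimated separately. Since the coefficients are bounded on `[t₀, T]`, the
discount factor is at most `K = exp (CA (T - t₀))` and the Duhamel term at most `K Cf (T - t₀)`.
The kernel factorises into one-dimensional heat kernels, so the growth bound on `g` reduces the
Gaussian term to a product of integrals `∫ exp (λ' y²) v(σ, z - y) dy`; completing the square gives
`(1 - 2λ'σ)^(-1/2) exp (λ' z² / (1 - 2λ'σ))`. As `λ' σ ≤ λ' R_j(T) < 1/16` this is at most
`2 exp (2λ' z²)`, and since `z = x - ∫ r` with `∫ r` bounded, `2λ' z² ≤ 4λ' x² + const`: the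
claim holds with `λ = 4λ'`.
-/

open Real MeasureTheory intervalIntegral Finset

/-- The paper's `v(σ, w)`, written with `rpow` as in the statement so that the kernel there
unfolds to it. -/
noncomputable def heatKernel (σ w : ℝ) : ℝ :=
  (2 * π * σ) ^ (-(1 : ℝ) / 2) * exp (-w ^ 2 / (2 * σ))

lemma heatKernel_nonneg {σ : ℝ} (hσ : 0 ≤ σ) (w : ℝ) : 0 ≤ heatKernel σ w :=
  mul_nonneg (rpow_nonneg (by positivity) _) (exp_pos _).le

section GaussianWeight

variable {σ l : ℝ}

lemma exp_mul_sq_mul_heatKernel (hσ : 0 < σ) (hl : 2 * l * σ ≠ 1) (z y : ℝ) :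
    exp (l * y ^ 2) * heatKernel σ (z - y) =
      (2 * π * σ) ^ (-(1 : ℝ) / 2) * exp (l * z ^ 2 / (1 - 2 * l * σ)) *
        exp (-((1 - 2 * l * σ) / (2 * σ)) * (y - z / (1 - 2 * l * σ)) ^ 2) := by
  have hexponent : l * y ^ 2 + -(z - y) ^ 2 / (2 * σ) = l * z ^ 2 / (1 - 2 * l * σ) +
      -((1 - 2 * l * σ) / (2 * σ)) * (y - z / (1 - 2 * l * σ)) ^ 2 := by
    have hp : 1 - 2 * l * σ ≠ 0 := sub_ne_zero.2 hl.symm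
    generalize hq : 1 - 2 * l * σ = p at *
    field_simp
    linear_combination (z ^ 2 - y ^ 2 * p) * hq
  rw [heatKernel, mul_left_comm, ← exp_add, hexponent, exp_add, ← mul_assoc]

lemma integrable_exp_mul_sq_mul_heatKernel (hσ : 0 < σ) (hl : 2 * l * σ < 1) (z : ℝ) :
    Integrable fun y => exp (l * y ^ 2) * heatKernel σ (z - y) := by
  simp_rw [exp_mul_sq_mul_heatKernel hσ hl.ne]
  exact ((integrable_exp_neg_mul_sq (by apply div_pos <;> linarith)).comp_sub_right _).const_mul _

lemma integral_exp_mul_sq_mul_heatKernel (hσ : 0 < σ) (hl : 2 * l * σ < 1) (z : ℝ) :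
    ∫ y, exp (l * y ^ 2) * heatKernel σ (z - y) =
      (1 - 2 * l * σ) ^ (-(1 : ℝ) / 2) * exp (l * z ^ 2 / (1 - 2 * l * σ)) := by
  have hp : 0 < 1 - 2 * l * σ := by linarith
  simp_rw [exp_mul_sq_mul_heatKernel hσ hl.ne]
  rw [MeasureTheory.integral_const_mul, integral_sub_right_eq_self (fun y => exp (-_ * y ^ 2)),
    integral_gaussian, mul_right_comm]
  congr 1
  rw [show π / ((1 - 2 * l * σ) / (2 * σ)) = (2 * π * σ) / (1 - 2 * l * σ) by field_simp,
    sqrt_eq_rpow, div_rpow (by positivity) hp.le, ← mul_div_assoc, ← rpow_add (by positivity),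
    show -(1 : ℝ) / 2 + 1 / 2 = 0 by norm_num, rpow_zero, one_div, ← rpow_neg hp.le, neg_div]

lemma integral_exp_mul_sq_mul_heatKernel_le (hσ : 0 < σ) (hl : 0 ≤ l) (hlσ : l * σ ≤ 1 / 4)
    (z : ℝ) : ∫ y, exp (l * y ^ 2) * heatKernel σ (z - y) ≤ 2 * exp (2 * l * z ^ 2) := by
  have hp : 1 / 2 ≤ 1 - 2 * l * σ := by linarith
  have hp1 : 1 - 2 * l * σ ≤ 1 := by nlinarith
  rw [integral_exp_mul_sq_mul_heatKernel hσ (by linarith)]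
  gcongr
  · calc (1 - 2 * l * σ) ^ (-(1 : ℝ) / 2) ≤ (1 - 2 * l * σ) ^ (-(1 : ℝ)) :=
          rpow_le_rpow_of_exponent_ge (by linarith) hp1 (by norm_num)
      _ ≤ 2 := by
          rw [rpow_neg_one, inv_le_comm₀ (by linarith) two_pos]
          linarith
  · rw [div_le_iff₀ (by linarith)]
    nlinarith [mul_nonneg hl (sq_nonneg z)]

end GaussianWeight

section ProductKernel

variable {ι : Type*} [Fintype ι] {g : (ι → ℝ) → ℝ} {c l : ℝ} {σ : ι → ℝ}

lemma abs_integral_mul_prod_heatKernel_le (hσ : ∀ j, 0 < σ j) (hl : 0 ≤ l)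
    (hlσ : ∀ j, l * σ j ≤ 1 / 4) (hg : ∀ y, |g y| ≤ c * exp (l * ∑ j, y j ^ 2)) (z : ι → ℝ) :
    |∫ y, g y * ∏ j, heatKernel (σ j) (z j - y j)| ≤
      c * 2 ^ Fintype.card ι * exp (2 * l * ∑ j, z j ^ 2) := by
  have hc : 0 ≤ c := nonneg_of_mul_nonneg_left ((abs_nonneg _).trans (hg 0)) (exp_pos _)
  set h : ι → ℝ → ℝ := fun j y => exp (l * y ^ 2) * heatKernel (σ j) (z j - y)
  have hpointwise (y : ι → ℝ) :
      ‖g y * ∏ j, heatKernel (σ j) (z j - y j)‖ ≤ c * ∏ j, h j (y j) := by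
    have hK : 0 ≤ ∏ j, heatKernel (σ j) (z j - y j) :=
      prod_nonneg fun j _ => heatKernel_nonneg (hσ j).le _
    have hweight : exp (l * ∑ j, y j ^ 2) * ∏ j, heatKernel (σ j) (z j - y j) =
        ∏ j, h j (y j) := by
      rw [mul_sum, exp_sum, ← prod_mul_distrib]
    rw [norm_mul, norm_of_nonneg hK, ← hweight, ← mul_assoc]
    exact mul_le_mul_of_nonneg_right (hg y) hK
  have hint : Integrable fun y : ι → ℝ => ∏ j, h j (y j) :=
    Integrable.fintype_prod fun j =>
      integrable_exp_mul_sq_mul_heatKernel (hσ j) (by linarith [hlσ j]) (z j)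
  calc |∫ y : ι → ℝ, g y * ∏ j, heatKernel (σ j) (z j - y j)|
      ≤ ∫ y : ι → ℝ, ‖g y * ∏ j, heatKernel (σ j) (z j - y j)‖ :=
        (Real.norm_eq_abs _).symm.trans_le (MeasureTheory.norm_integral_le_integral_norm _)
    _ ≤ ∫ y : ι → ℝ, c * ∏ j, h j (y j) :=
        integral_mono_of_nonneg (.of_forall fun _ => norm_nonneg _) (hint.const_mul c)
          (.of_forall hpointwise)
    _ = c * ∏ j, ∫ y : ℝ, h j y := by
        rw [MeasureTheory.integral_const_mul, integral_fintype_prod_volume_eq_prod]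
    _ ≤ c * ∏ j, 2 * exp (2 * l * z j ^ 2) := by
        refine mul_le_mul_of_nonneg_left (prod_le_prod (fun j _ => ?_) fun j _ => ?_) hc
        · exact integral_nonneg fun y => mul_nonneg (exp_pos _).le (heatKernel_nonneg (hσ j).le _)
        · exact integral_exp_mul_sq_mul_heatKernel_le (hσ j) hl (hlσ j) (z j)
    _ = c * 2 ^ Fintype.card ι * exp (2 * l * ∑ j, z j ^ 2) := by
        rw [prod_mul_distrib, prod_const, ← exp_sum, mul_sum, mul_assoc, card_univ]

lemma exp_sum_sq_sub_le {B : ℝ} (hl : 0 ≤ l) (x b : ι → ℝ) (hb : ∀ j, |b j| ≤ B) :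
    exp (2 * l * ∑ j, (x j - b j) ^ 2) ≤
      exp (4 * l * Fintype.card ι * B ^ 2) * exp (4 * l * ∑ j, x j ^ 2) := by
  have hsq (j : ι) : (x j - b j) ^ 2 ≤ 2 * x j ^ 2 + 2 * B ^ 2 := by
    nlinarith [sq_nonneg (x j + b j), sq_le_sq' (abs_le.1 (hb j)).1 (abs_le.1 (hb j)).2]
  have hsum : ∑ j, (x j - b j) ^ 2 ≤ 2 * ∑ j, x j ^ 2 + 2 * Fintype.card ι * B ^ 2 :=
    calc ∑ j, (x j - b j) ^ 2 ≤ ∑ j, (2 * x j ^ 2 + 2 * B ^ 2) := sum_le_sum fun j _ => hsq j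
      _ = _ := by rw [sum_add_distrib, ← mul_sum, sum_const, card_univ, nsmul_eq_mul]; ring
  rw [← exp_add, exp_le_exp]
  nlinarith

lemma abs_integral_mul_prod_heatKernel_sub_le {B : ℝ} (hσ : ∀ j, 0 < σ j) (hl : 0 ≤ l)
    (hlσ : ∀ j, l * σ j ≤ 1 / 4) (hg : ∀ y, |g y| ≤ c * exp (l * ∑ j, y j ^ 2))
    (x b : ι → ℝ) (hb : ∀ j, |b j| ≤ B) :
    |∫ y, g y * ∏ j, heatKernel (σ j) (x j - b j - y j)| ≤
      c * 2 ^ Fintype.card ι * exp (4 * l * Fintype.card ι * B ^ 2) *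
        exp (4 * l * ∑ j, x j ^ 2) := by
  have hc : 0 ≤ c := nonneg_of_mul_nonneg_left ((abs_nonneg _).trans (hg 0)) (exp_pos _)
  rw [mul_assoc _ (exp _)]
  exact (abs_integral_mul_prod_heatKernel_le hσ hl hlσ hg (x - b)).trans
    (mul_le_mul_of_nonneg_left (exp_sum_sq_sub_le hl x b hb) (by positivity))

end ProductKernel

lemma abs_intervalIntegral_le_of_mem_Icc {F : ℝ → ℝ} {a b s t C : ℝ} (hs : s ∈ Set.Icc a b)
    (ht : t ∈ Set.Icc a b) (hF : ∀ x ∈ Set.Icc a b, |F x| ≤ C) :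
    |∫ x in s..t, F x| ≤ C * (b - a) := by
  have hC : 0 ≤ C := (abs_nonneg _).trans (hF s hs)
  calc |∫ x in s..t, F x| ≤ C * |t - s| := by
        simpa only [Real.norm_eq_abs] using norm_integral_le_of_norm_le_const fun x hx =>
          (Real.norm_eq_abs (F x)).trans_le
            (hF x (Set.uIcc_subset_Icc hs ht (Set.uIoc_subset_uIcc hx)))
    _ ≤ C * (b - a) := by
        gcongr
        rw [abs_sub_le_iff]
        constructor <;> linarith [hs.1, hs.2, ht.1, ht.2]

lemma abs_neg_integral_add_exp_mul_le {A f : ℝ → ℝ} {a b t CA Cf : ℝ} (ht : t ∈ Set.Icc a b)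
    (hA : ∀ s ∈ Set.Icc a b, |A s| ≤ CA) (hf : ∀ s ∈ Set.Icc a b, |f s| ≤ Cf) (I : ℝ) :
    |-(∫ s in t..b, exp (∫ ρ in s..t, A ρ) * f s) + exp (-∫ s in t..b, A s) * I| ≤
      exp (CA * (b - a)) * Cf * (b - a) + exp (CA * (b - a)) * |I| := by
  have hb : b ∈ Set.Icc a b := ⟨ht.1.trans ht.2, le_rfl⟩
  have hexpA (s : ℝ) (hs : s ∈ Set.Icc a b) : exp (∫ ρ in s..t, A ρ) ≤ exp (CA * (b - a)) :=
    exp_le_exp.2 ((le_abs_self _).trans (abs_intervalIntegral_le_of_mem_Icc hs ht hA))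
  have hsource :
      |∫ s in t..b, exp (∫ ρ in s..t, A ρ) * f s| ≤ exp (CA * (b - a)) * Cf * (b - a) :=
    abs_intervalIntegral_le_of_mem_Icc ht hb fun s hs => by
      rw [abs_mul, abs_exp]
      exact mul_le_mul (hexpA s hs) (hf s hs) (abs_nonneg _) (exp_pos _).le
  have hdiscount : exp (-∫ s in t..b, A s) ≤ exp (CA * (b - a)) := by
    rw [← integral_symm]
    exact hexpA b hb
  calc _ ≤ |∫ s in t..b, exp (∫ ρ in s..t, A ρ) * f s| + exp (-∫ s in t..b, A s) * |I| :=
        (abs_add_le _ _).trans_eq (by rw [abs_neg, abs_mul, abs_exp])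
    _ ≤ _ := add_le_add hsource (mul_le_mul_of_nonneg_right hdiscount (abs_nonneg _))

theorem feynman_kac_growth_bound_general
    (n : ℕ) (t₀ T : ℝ) (hT : t₀ < T)
    (R : Fin n → ℝ → ℝ)
    (hRnonneg : ∀ j, ∀ t ∈ Set.Icc t₀ T, 0 ≤ R j t)
    (hRmono : ∀ j, StrictMonoOn (R j) (Set.Icc t₀ T))
    (hRT : ∀ j, 0 < R j T)
    (r : Fin n → ℝ → ℝ) (A₁ f : ℝ → ℝ)
    (Cr CA Cf : ℝ) (hrB : ∀ j, ∀ t ∈ Set.Icc t₀ T, |r j t| ≤ Cr)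
    (hA₁B : ∀ t ∈ Set.Icc t₀ T, |A₁ t| ≤ CA) (hfB : ∀ t ∈ Set.Icc t₀ T, |f t| ≤ Cf)
    (g : (Fin n → ℝ) → ℝ)
    (c' lam' : ℝ) (hc' : 0 < c') (hlam' : 0 < lam')
    (hlam'' : ∀ j, lam' < (16 * R j T)⁻¹)
    (hgrowth : ∀ x : Fin n → ℝ, |g x| ≤ c' * Real.exp (lam' * ∑ j, (x j) ^ 2))
    (u : ℝ → (Fin n → ℝ) → ℝ)
    (hu : ∀ t : ℝ, t₀ ≤ t → t < T → ∀ x : Fin n → ℝ,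
      u t x = -(∫ s in t..T, Real.exp (∫ ρ in s..t, A₁ ρ) * f s)
        + Real.exp (-(∫ s in t..T, A₁ s)) *
          ∫ y : Fin n → ℝ, g y *
            ∏ j, (2 * Real.pi * (R j T - R j t)) ^ (-(1 : ℝ) / 2) *
              Real.exp (-(x j - (∫ s in t..T, r j s) - y j) ^ 2
                / (2 * (R j T - R j t)))) :
    ∃ M lam : ℝ, 0 < M ∧ 0 < lam ∧ (∀ j, lam < (4 * R j T)⁻¹) ∧
      ∀ t : ℝ, t₀ ≤ t → t < T → ∀ x : Fin n → ℝ,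
        |u t x| ≤ M * Real.exp (lam * ∑ j, (x j) ^ 2) := by
  have hTT : T ∈ Set.Icc t₀ T := ⟨hT.le, le_rfl⟩
  have hCf : 0 ≤ Cf := (abs_nonneg _).trans (hfB T hTT)
  have hlamR (j : Fin n) : 16 * R j T * lam' < 1 :=
    (lt_inv_mul_iff₀ (by linarith [hRT j])).1 (by rw [mul_one]; exact hlam'' j)
  set K := exp (CA * (T - t₀))
  set G := c' * 2 ^ n * exp (4 * lam' * n * (Cr * (T - t₀)) ^ 2)
  have hsource : 0 ≤ K * Cf * (T - t₀) := by have := hT.le; positivity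
  refine ⟨K * Cf * (T - t₀) + K * G, 4 * lam', add_pos_of_nonneg_of_pos hsource (by positivity),
    by positivity,
    fun j => ?_, fun t ht htT x => ?_⟩
  · rw [← mul_one (4 * R j T)⁻¹, lt_inv_mul_iff₀ (by linarith [hRT j])]
    linarith [hlamR j]
  have ht : t ∈ Set.Icc t₀ T := ⟨ht, htT.le⟩
  have hgauss := abs_integral_mul_prod_heatKernel_sub_le (σ := fun j => R j T - R j t)
    (fun j => sub_pos.2 (hRmono j ht hTT htT)) hlam'.le
    (fun j => by nlinarith [hRnonneg j t ht, hlamR j]) hgrowth x (fun j => ∫ s in t..T, r j s)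
    (fun j => abs_intervalIntegral_le_of_mem_Icc ht hTT (hrB j))
  rw [Fintype.card_fin] at hgauss
  have hE : 1 ≤ exp (4 * lam' * ∑ j, x j ^ 2) := one_le_exp (by positivity)
  rw [hu t ht.1 htT x]
  calc _ ≤ K * Cf * (T - t₀) + K * (G * exp (4 * lam' * ∑ j, x j ^ 2)) :=
        (abs_neg_integral_add_exp_mul_le ht hA₁B hfB _).trans
          (add_le_add le_rfl (mul_le_mul_of_nonneg_left hgauss (exp_pos _).le))
    _ ≤ K * Cf * (T - t₀) * exp (4 * lam' * ∑ j, x j ^ 2) +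
        K * (G * exp (4 * lam' * ∑ j, x j ^ 2)) :=
        add_le_add (le_mul_of_one_le_right hsource hE) le_rfl
    _ = _ := by ring

/-- There exist `M > 0` and `0 < λ < min_j (4 R_j(T))⁻¹` such that
`|u(t,x)| ≤ M exp(λ|x|²)` for all `(t,x) ∈ [t₀,T) × ℝⁿ`. -/
theorem feynman_kac_growth_bound
    (n : ℕ) (hn : 1 ≤ n) (t₀ T : ℝ) (ht₀ : 0 ≤ t₀) (hT : t₀ < T)
    (R : Fin n → ℝ → ℝ)
    (hRsmooth : ∀ j, ContDiffOn ℝ 1 (R j) (Set.Icc t₀ T))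
    (hRnonneg : ∀ j, ∀ t ∈ Set.Icc t₀ T, 0 ≤ R j t)
    (hRmono : ∀ j, StrictMonoOn (R j) (Set.Icc t₀ T))
    (hRT : ∀ j, 0 < R j T)
    (r : Fin n → ℝ → ℝ) (A₁ f : ℝ → ℝ)
    (hr : ∀ j, ContinuousOn (r j) (Set.Icc t₀ T))
    (hA₁ : ContinuousOn A₁ (Set.Icc t₀ T)) (hf : ContinuousOn f (Set.Icc t₀ T))
    (Cr CA Cf : ℝ) (hrB : ∀ j, ∀ t ∈ Set.Icc t₀ T, |r j t| ≤ Cr)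
    (hA₁B : ∀ t ∈ Set.Icc t₀ T, |A₁ t| ≤ CA) (hfB : ∀ t ∈ Set.Icc t₀ T, |f t| ≤ Cf)
    (g : (Fin n → ℝ) → ℝ) (hg : Continuous g)
    (c' lam' : ℝ) (hc' : 0 < c') (hlam' : 0 < lam')
    (hlam'' : ∀ j, lam' < (16 * R j T)⁻¹)
    (hgrowth : ∀ x : Fin n → ℝ, |g x| ≤ c' * Real.exp (lam' * ∑ j, (x j) ^ 2))
    (u : ℝ → (Fin n → ℝ) → ℝ)
    (hu : ∀ t : ℝ, t₀ ≤ t → t < T → ∀ x : Fin n → ℝ,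
      u t x = -(∫ s in t..T, Real.exp (∫ ρ in s..t, A₁ ρ) * f s)
        + Real.exp (-(∫ s in t..T, A₁ s)) *
          ∫ y : Fin n → ℝ, g y *
            ∏ j, (2 * Real.pi * (R j T - R j t)) ^ (-(1 : ℝ) / 2) *
              Real.exp (-(x j - (∫ s in t..T, r j s) - y j) ^ 2
                / (2 * (R j T - R j t)))) :
    ∃ M lam : ℝ, 0 < M ∧ 0 < lam ∧ (∀ j, lam < (4 * R j T)⁻¹) ∧
      ∀ t : ℝ, t₀ ≤ t → t < T → ∀ x : Fin n → ℝ,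
        |u t x| ≤ M * Real.exp (lam * ∑ j, (x j) ^ 2) :=
  feynman_kac_growth_bound_general n t₀ T hT R hRnonneg hRmono hRT r A₁ f Cr CA Cf hrB hA₁B hfB g c'
    lam' hc' hlam' hlam'' hgrowth u hu
end
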